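/- Let A be a Novikov algebra and let I be a two-sided ideal of A. If x ∈ A and x^n ∈ I for some n ≥ 1, where x^k denotes the left-normed power, then x^{2n+2} ∈ I^2, where I^2 is the span of all products i·j with i, j ∈ I. -/

import Mathlib

/-!
Write `D k = x^k x^2 - x^{k+2}` for the defect of the power `x^k x^2` from being left-normed.
Right-commutativity gives `D k · x = D (k+1)`, and with left-symmetry an induction yields
`x^{i+1} x^{j+1} = x^{i+j+2} + j D(i+j)`, the defect depending only on `i + j`.
Comparing the two products `x^{n+1} x^{n+1}` and `x^n x^{n+2}` of total degree `2n+2` eliminates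
the defect: `x^{2n+2} = (n+1) x^{n+1} x^{n+1} - n x^n x^{n+2}`, and all four factors lie in `I`.
-/

/-- Left-normed power: `lpow x 1 = x`, `lpow x (k+1) = lpow x k * x`
(the value at `0` is a junk value). -/
def lpow {A : Type*} [Mul A] [Zero A] (x : A) : ℕ → A
  | 0 => 0
  | 1 => x
  | (n + 2) => lpow x (n + 1) * x

section LeftNormedPowers

variable {A : Type*} [NonUnitalNonAssocRing A]

@[simp]
lemma lpow_one (x : A) : lpow x 1 = x := rfl

lemma lpow_two (x : A) : lpow x 2 = x * x := rfl

lemma lpow_succ (x : A) {k : ℕ} (hk : 1 ≤ k) : lpow x (k + 1) = lpow x k * x := by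
  obtain ⟨m, rfl⟩ := Nat.exists_eq_add_of_le' hk
  rfl

def lpowDefect (x : A) (k : ℕ) : A := lpow x k * lpow x 2 - lpow x (k + 2)

lemma lpowDefect_mul (hrcomm : ∀ x y z : A, (x * y) * z = (x * z) * y) (x : A) {k : ℕ}
    (hk : 1 ≤ k) : lpowDefect x k * x = lpowDefect x (k + 1) := by
  rw [lpowDefect, lpowDefect, sub_mul, hrcomm, ← lpow_succ x hk, ← lpow_succ x (by omega)]

lemma nsmul_lpowDefect_mul (hrcomm : ∀ x y z : A, (x * y) * z = (x * z) * y) (x : A) (j k : ℕ)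
    (hjk : j ≤ k) : (j • lpowDefect x k) * x = j • lpowDefect x (k + 1) := by
  rcases Nat.eq_zero_or_pos j with rfl | hj
  · simp
  · rw [smul_mul_assoc, lpowDefect_mul hrcomm x (by omega)]

lemma mul_lpow (hlsym : ∀ x y z : A, (x * y) * z - x * (y * z) = (y * x) * z - y * (x * z))
    (hrcomm : ∀ x y z : A, (x * y) * z = (x * z) * y) (x : A) (j : ℕ) :
    x * lpow x (j + 1) = lpow x (j + 2) + j • lpowDefect x j := by
  induction j with
  | zero => simp [lpow]
  | succ j ih =>
    have hsym : (x * lpow x (j + 1)) * x - x * lpow x (j + 2) =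
        lpow x (j + 3) - lpow x (j + 1) * lpow x 2 :=
      hlsym x (lpow x (j + 1)) x
    have hD : lpowDefect x (j + 1) = lpow x (j + 1) * lpow x 2 - lpow x (j + 3) := rfl
    rw [ih, add_mul, nsmul_lpowDefect_mul hrcomm x j j le_rfl, ← lpow_succ x (by omega)] at hsym
    rw [succ_nsmul]
    linear_combination (norm := abel) -hsym - hD

lemma lpow_mul_lpow (hlsym : ∀ x y z : A, (x * y) * z - x * (y * z) = (y * x) * z - y * (x * z))
    (hrcomm : ∀ x y z : A, (x * y) * z = (x * z) * y) (x : A) (i j : ℕ) :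
    lpow x (i + 1) * lpow x (j + 1) = lpow x (i + j + 2) + j • lpowDefect x (i + j) := by
  induction i with
  | zero => simpa using mul_lpow hlsym hrcomm x j
  | succ i ih =>
    rw [lpow_succ x (by omega : 1 ≤ i + 1), hrcomm, ih, add_mul,
      nsmul_lpowDefect_mul hrcomm x j (i + j) (by omega), ← lpow_succ x (by omega),
      Nat.add_right_comm i 1 j]

lemma lpow_two_mul_add_two
    (hlsym : ∀ x y z : A, (x * y) * z - x * (y * z) = (y * x) * z - y * (x * z))
    (hrcomm : ∀ x y z : A, (x * y) * z = (x * z) * y) (x : A) {n : ℕ} (hn : 1 ≤ n) :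
    lpow x (2 * n + 2) =
      (n + 1) • (lpow x (n + 1) * lpow x (n + 1)) - n • (lpow x n * lpow x (n + 2)) := by
  obtain ⟨m, rfl⟩ := Nat.exists_eq_add_of_le' hn
  have hsq : lpow x (m + 2) * lpow x (m + 2) =
      lpow x (2 * m + 4) + (m + 1) • lpowDefect x (2 * m + 2) := by
    convert lpow_mul_lpow hlsym hrcomm x (m + 1) (m + 1) using 3
      <;> first | omega | congr 1; omega
  have hmixed : lpow x (m + 1) * lpow x (m + 3) =
      lpow x (2 * m + 4) + (m + 2) • lpowDefect x (2 * m + 2) := by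
    convert lpow_mul_lpow hlsym hrcomm x m (m + 2) using 3
      <;> first | omega | congr 1; omega
  rw [show 2 * (m + 1) + 2 = 2 * m + 4 by ring, hsq, hmixed, smul_add, smul_add, smul_smul,
    smul_smul, mul_comm (m + 1 + 1), succ_nsmul _ (m + 1)]
  abel

end LeftNormedPowers

lemma lpow_add_mem {A : Type*} [NonUnitalNonAssocRing A] {F : Type*} [Semiring F] [Module F A]
    {I : Submodule F A} (hIright : ∀ a ∈ I, ∀ b : A, a * b ∈ I) (x : A) {n : ℕ} (hn : 1 ≤ n)
    (hx : lpow x n ∈ I) (k : ℕ) : lpow x (n + k) ∈ I := by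
  induction k with
  | zero => exact hx
  | succ k ih => rw [← add_assoc, lpow_succ x (by omega)]; exact hIright _ ih x

theorem novikov_lpow_mem_ideal_sq_general
    (F : Type*) (A : Type*) [Field F] [NonUnitalNonAssocRing A]
    [Module F A]
    (hNov1 : ∀ x y z : A, (x * y) * z - x * (y * z) = (y * x) * z - y * (x * z))
    (hNov2 : ∀ x y z : A, (x * y) * z = (x * z) * y)
    (I : Submodule F A)
    (hIright : ∀ a ∈ I, ∀ b : A, a * b ∈ I)
    (x : A) (n : ℕ) (hn : 1 ≤ n) (hx : lpow x n ∈ I) :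
    lpow x (2 * n + 2) ∈
      Submodule.span F {z : A | ∃ i ∈ I, ∃ j ∈ I, i * j = z} := by
  have hprod : ∀ i ∈ I, ∀ j ∈ I,
      i * j ∈ Submodule.span F {z : A | ∃ i ∈ I, ∃ j ∈ I, i * j = z} :=
    fun i hi j hj => Submodule.subset_span ⟨i, hi, j, hj, rfl⟩
  rw [lpow_two_mul_add_two hNov1 hNov2 x hn]
  refine sub_mem (nsmul_mem (hprod _ ?_ _ ?_) _) (nsmul_mem (hprod _ hx _ ?_) _)
  all_goals exact lpow_add_mem hIright x hn hx _

/-- **Lemma 3.** Let `A` be a Novikov algebra (over a field `F`)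
and let `I` be a two-sided ideal of `A`.  If `x ∈ A` and `x^n ∈ I` for some
`n ≥ 1`, then `x^{2n+2} ∈ I²`, where `I²` is the span of all products `i·j`
with `i, j ∈ I`. -/
theorem novikov_lpow_mem_ideal_sq
    (F : Type*) (A : Type*) [Field F] [NonUnitalNonAssocRing A]
    [Module F A] [IsScalarTower F A A] [SMulCommClass F A A]
    (hNov1 : ∀ x y z : A, (x * y) * z - x * (y * z) = (y * x) * z - y * (x * z))
    (hNov2 : ∀ x y z : A, (x * y) * z = (x * z) * y)
    (I : Submodule F A)
    (hIright : ∀ a ∈ I, ∀ b : A, a * b ∈ I)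
    (hIleft : ∀ a ∈ I, ∀ b : A, b * a ∈ I)
    (x : A) (n : ℕ) (hn : 1 ≤ n) (hx : lpow x n ∈ I) :
    lpow x (2 * n + 2) ∈
      Submodule.span F {z : A | ∃ i ∈ I, ∃ j ∈ I, i * j = z} :=
  novikov_lpow_mem_ideal_sq_general F A hNov1 hNov2 I hIright x n hn hx
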